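/- Let G₂ be the group presented by generators a, b, c and relators a², b², c², (ab)³, (bc)³, (ac)³. Then the homomorphism σ₂ from G₂ to the group of affine equivalences of ℝ² determined by σ₂(a)(x,y) = (x, x − y), σ₂(b)(x,y) = (3 − y, 3 − x), σ₂(c)(x,y) = (−x + y, y) is well defined (the images satisfy the relators) and injective. -/

import Mathlib

/-!
The reflections `a` and `c` fix the origin and generate a subgroup `W` of order at most six,
while `u = baca` and `v = abac` act as the translations by `(3, 3)` and `(3, 0)`. Using the
Coxeter relations, `u` and `v` commute and conjugation by `a` and `c` preserves `T = ⟨u, v⟩`;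
since `b = u · aca`, the subgroup `T` is normal and `G₂ = T W`. If `u ^ m * v ^ n * w` acts
trivially, evaluating at the origin gives `m = n = 0`, and then `w = 1` because the five
nontrivial elements of `W` all move `(1, 0)`.
-/

open Subgroup

theorem braid_of_mul_pow_three_eq_one {G : Type*} [Group G] {x y : G} (hx : x * x = 1)
    (hy : y * y = 1) (h : (x * y) ^ 3 = 1) : x * y * x = y * x * y := by
  have hx' : x⁻¹ = x := inv_eq_of_mul_eq_one_right hx
  have hy' : y⁻¹ = y := inv_eq_of_mul_eq_one_right hy
  calc x * y * x = (y * x * y)⁻¹ :=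
        eq_inv_of_mul_eq_one_left (by simpa only [pow_succ, pow_zero, one_mul, mul_assoc] using h)
    _ = y * x * y := by simp only [mul_inv_rev, hx', hy', mul_assoc]

theorem Subgroup.mem_normalizer_closure_of_mul_self_eq_one {G : Type*} [Group G] {g : G}
    (hg : g * g = 1) {s : Set G} (h : ∀ x ∈ s, g * x * g ∈ closure s) :
    g ∈ normalizer (closure s : Set G) := by
  have hg' : g⁻¹ = g := inv_eq_of_mul_eq_one_right hg
  have hconj : ∀ x ∈ closure s, g * x * g ∈ closure s := fun x hx => by
    simpa [hg'] using (closure_le (K := (closure s).comap (MulAut.conj g).toMonoidHom)).mpr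
      (fun y hy => by simpa [hg'] using h y hy) hx
  refine mem_normalizer_iff.mpr fun x => hg'.symm ▸ ⟨hconj x, fun hx => ?_⟩
  have hx' := hconj _ hx
  simp only [← mul_assoc, hg, one_mul] at hx'
  simpa only [mul_assoc, hg, mul_one] using hx'

theorem Commute.mem_closure_pair {G : Type*} [Group G] {x y z : G} (hxy : Commute x y) :
    z ∈ closure ({x, y} : Set G) ↔ ∃ m n : ℤ, x ^ m * y ^ n = z := by
  refine ⟨fun hz => ?_, ?_⟩
  · induction hz using closure_induction with
    | mem z hz =>
      rcases hz with rfl | rfl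
      exacts [⟨1, 0, by simp⟩, ⟨0, 1, by simp⟩]
    | one => exact ⟨0, 0, by simp⟩
    | mul _ _ _ _ ih₁ ih₂ =>
      obtain ⟨m, n, rfl⟩ := ih₁
      obtain ⟨m', n', rfl⟩ := ih₂
      refine ⟨m + m', n + n', ?_⟩
      rw [zpow_add, zpow_add, mul_assoc, ← mul_assoc (x ^ m'), (hxy.zpow_zpow m' n).eq]
      simp only [mul_assoc]
    | inv _ _ ih =>
      obtain ⟨m, n, rfl⟩ := ih
      refine ⟨-m, -n, ?_⟩
      rw [mul_inv_rev, zpow_neg, zpow_neg, (hxy.zpow_zpow m n).inv_inv.eq]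
  · rintro ⟨m, n, rfl⟩
    exact mul_mem (zpow_mem (subset_closure (by simp)) m) (zpow_mem (subset_closure (by simp)) n)

abbrev relators : Set (FreeGroup (Fin 3)) :=
  {FreeGroup.of 0 ^ 2, FreeGroup.of 1 ^ 2, FreeGroup.of 2 ^ 2,
    (FreeGroup.of 0 * FreeGroup.of 1) ^ 3,
    (FreeGroup.of 1 * FreeGroup.of 2) ^ 3,
    (FreeGroup.of 0 * FreeGroup.of 2) ^ 3}

abbrev G₂ := PresentedGroup relators

namespace G₂

def a : G₂ := .of 0
def b : G₂ := .of 1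
def c : G₂ := .of 2

lemma a_mul_a : a * a = 1 := by rw [← sq]; exact PresentedGroup.one_of_mem (by simp)
lemma b_mul_b : b * b = 1 := by rw [← sq]; exact PresentedGroup.one_of_mem (by simp)
lemma c_mul_c : c * c = 1 := by rw [← sq]; exact PresentedGroup.one_of_mem (by simp)

lemma mul_a_mul_a (g : G₂) : g * a * a = g := by rw [mul_assoc, a_mul_a, mul_one]
lemma mul_c_mul_c (g : G₂) : g * c * c = g := by rw [mul_assoc, c_mul_c, mul_one]

lemma a_inv : a⁻¹ = a := inv_eq_of_mul_eq_one_right a_mul_a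
lemma b_inv : b⁻¹ = b := inv_eq_of_mul_eq_one_right b_mul_b
lemma c_inv : c⁻¹ = c := inv_eq_of_mul_eq_one_right c_mul_c

lemma a_mul_b_mul_a : a * b * a = b * a * b :=
  braid_of_mul_pow_three_eq_one a_mul_a b_mul_b (PresentedGroup.one_of_mem (by simp))
lemma b_mul_c_mul_b : b * c * b = c * b * c :=
  braid_of_mul_pow_three_eq_one b_mul_b c_mul_c (PresentedGroup.one_of_mem (by simp))
lemma a_mul_c_mul_a : a * c * a = c * a * c :=
  braid_of_mul_pow_three_eq_one a_mul_a c_mul_c (PresentedGroup.one_of_mem (by simp))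

def u : G₂ := b * a * c * a
def v : G₂ := a * b * a * c

lemma a_mul_u_mul_a : a * u * a = v := by
  simp only [u, v, ← mul_assoc, mul_a_mul_a]
lemma a_mul_v_mul_a : a * v * a = u := by
  simp only [u, v, ← mul_assoc, a_mul_a, one_mul]
lemma c_mul_v_mul_c : c * v * c = v⁻¹ := by
  simp only [v, mul_inv_rev, a_inv, b_inv, c_inv, ← mul_assoc, mul_c_mul_c]

lemma c_mul_u_mul_c : c * u * c = u * v⁻¹ :=
  calc c * u * c = c * b * (c * a * c) * c := by
        rw [← a_mul_c_mul_a]; simp only [u, ← mul_assoc]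
    _ = c * b * c * a := by simp only [← mul_assoc, mul_c_mul_c]
    _ = b * c * b * a := by rw [b_mul_c_mul_b]
    _ = b * (c * a * c) * c * a * b * a := by simp only [← mul_assoc, mul_c_mul_c, mul_a_mul_a]
    _ = u * v⁻¹ := by
        rw [← a_mul_c_mul_a]; simp only [u, v, mul_inv_rev, a_inv, b_inv, c_inv, ← mul_assoc]

lemma commute_u_v : Commute u v :=
  calc u * v = b * a * c * b * a * c := by simp only [u, v, ← mul_assoc, mul_a_mul_a]
    _ = b * a * (c * b * c) * c * a * c := by simp only [← mul_assoc, mul_c_mul_c]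
    _ = b * a * (b * c * b) * c * a * c := by rw [b_mul_c_mul_b]
    _ = (b * a * b) * c * b * (c * a * c) := by simp only [← mul_assoc]
    _ = v * u := by rw [← a_mul_b_mul_a, ← a_mul_c_mul_a]; simp only [u, v, ← mul_assoc]

def T : Subgroup G₂ := closure {u, v}
def W : Subgroup G₂ := closure {a, c}

lemma u_mem_T : u ∈ T := subset_closure (by simp)
lemma v_mem_T : v ∈ T := subset_closure (by simp)

lemma b_eq_u_mul : b = u * (a * c * a) := by
  simp only [u, ← mul_assoc, mul_a_mul_a, mul_c_mul_c]

lemma eq_top_of_a_mem_of_c_mem_of_u_mem {H : Subgroup G₂} (ha : a ∈ H) (hc : c ∈ H)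
    (hu : u ∈ H) : H = ⊤ := by
  rw [eq_top_iff, ← PresentedGroup.closure_range_of, closure_le]
  rintro _ ⟨i, rfl⟩
  fin_cases i
  · exact ha
  · show b ∈ H
    rw [b_eq_u_mul]
    exact mul_mem hu (mul_mem (mul_mem ha hc) ha)
  · exact hc

instance T_normal : T.Normal := by
  rw [← normalizer_eq_top_iff]
  refine eq_top_of_a_mem_of_c_mem_of_u_mem ?_ ?_ (le_normalizer u_mem_T)
  · refine mem_normalizer_closure_of_mul_self_eq_one a_mul_a ?_
    rintro x (rfl | rfl)
    · rw [a_mul_u_mul_a]; exact v_mem_T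
    · rw [a_mul_v_mul_a]; exact u_mem_T
  · refine mem_normalizer_closure_of_mul_self_eq_one c_mul_c ?_
    rintro x (rfl | rfl)
    · rw [c_mul_u_mul_c]; exact mul_mem u_mem_T (inv_mem v_mem_T)
    · rw [c_mul_v_mul_c]; exact inv_mem v_mem_T

lemma T_sup_W : T ⊔ W = ⊤ :=
  eq_top_of_a_mem_of_c_mem_of_u_mem (mem_sup_right (subset_closure (by simp)))
    (mem_sup_right (subset_closure (by simp))) (mem_sup_left u_mem_T)

lemma exists_mem_T_mul_mem_W (g : G₂) : ∃ x ∈ T, ∃ w ∈ W, x * w = g :=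
  mem_sup_of_normal_left.mp (T_sup_W ▸ mem_top g)

lemma W_subset : (W : Set G₂) ⊆ {1, a, c, a * c, c * a, a * c * a} := by
  have hmul : ∀ w s : G₂, s = a ∨ s = c → w ∈ ({1, a, c, a * c, c * a, a * c * a} : Set G₂) →
      w * s ∈ ({1, a, c, a * c, c * a, a * c * a} : Set G₂) := by
    simp only [Set.mem_insert_iff, Set.mem_singleton_iff]
    rintro w s (rfl | rfl) (rfl | rfl | rfl | rfl | rfl | rfl) <;>
      first
      | simp only [one_mul, a_mul_a, c_mul_c, mul_a_mul_a, mul_c_mul_c, true_or, or_true]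
      | simp only [a_mul_c_mul_a, mul_c_mul_c, true_or, or_true]
  intro w hw
  induction hw using closure_induction_right with
  | one => exact Or.inl rfl
  | mul_right w _ s hs ih => exact hmul w s hs ih
  | mul_inv_cancel w _ s hs ih =>
    exact hmul w s⁻¹ (by rcases hs with rfl | rfl; exacts [.inl a_inv, .inr c_inv]) ih

end G₂

def reflA : (ℝ × ℝ) ≃ᵃ[ℝ] (ℝ × ℝ) :=
  (LinearEquiv.ofInvolutive
    ((LinearMap.fst ℝ ℝ ℝ).prod (LinearMap.fst ℝ ℝ ℝ - LinearMap.snd ℝ ℝ ℝ))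
    fun p => by simp).toAffineEquiv

def reflB : (ℝ × ℝ) ≃ᵃ[ℝ] (ℝ × ℝ) :=
  (LinearEquiv.ofInvolutive (-(LinearMap.snd ℝ ℝ ℝ).prod (LinearMap.fst ℝ ℝ ℝ))
    fun p => by simp).toAffineEquiv.trans (AffineEquiv.constVAdd ℝ (ℝ × ℝ) (3, 3))

def reflC : (ℝ × ℝ) ≃ᵃ[ℝ] (ℝ × ℝ) :=
  (LinearEquiv.ofInvolutive
    ((-LinearMap.fst ℝ ℝ ℝ + LinearMap.snd ℝ ℝ ℝ).prod (LinearMap.snd ℝ ℝ ℝ))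
    fun p => by simp).toAffineEquiv

lemma reflA_apply (p : ℝ × ℝ) : reflA p = (p.1, p.1 - p.2) := rfl
lemma reflB_apply (p : ℝ × ℝ) : reflB p = (3 - p.2, 3 - p.1) := by
  show ((3 : ℝ), (3 : ℝ)) + (-p.2, -p.1) = _
  simp only [Prod.mk_add_mk, sub_eq_add_neg]
lemma reflC_apply (p : ℝ × ℝ) : reflC p = (-p.1 + p.2, p.2) := rfl

lemma lift_reflections_relator_eq_one :
    ∀ r ∈ relators, FreeGroup.lift ![reflA, reflB, reflC] r = 1 := by
  rintro r (rfl | rfl | rfl | rfl | rfl | rfl) <;> ext p <;>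
    simp only [pow_succ, pow_zero, one_mul, map_mul, FreeGroup.lift_apply_of, Matrix.cons_val,
      AffineEquiv.coe_mul, AffineEquiv.coe_one, Function.comp_apply, id_eq, reflA_apply,
      reflB_apply, reflC_apply] <;> ring

def σ₂ : G₂ →* (ℝ × ℝ) ≃ᵃ[ℝ] (ℝ × ℝ) := PresentedGroup.toGroup lift_reflections_relator_eq_one

namespace σ₂

open G₂

lemma map_a : σ₂ a = reflA := PresentedGroup.toGroup.of _
lemma map_b : σ₂ b = reflB := PresentedGroup.toGroup.of _
lemma map_c : σ₂ c = reflC := PresentedGroup.toGroup.of _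

lemma map_u : σ₂ u = AffineEquiv.constVAdd ℝ (ℝ × ℝ) (3, 3) := by
  ext p <;>
    simp only [u, map_mul, map_a, map_b, map_c, AffineEquiv.coe_mul, Function.comp_apply,
      reflA_apply, reflB_apply, reflC_apply, AffineEquiv.constVAdd_apply, vadd_eq_add,
      Prod.fst_add, Prod.snd_add] <;> ring

lemma map_v : σ₂ v = AffineEquiv.constVAdd ℝ (ℝ × ℝ) (3, 0) := by
  ext p <;> simp [v, map_a, map_b, map_c, reflA_apply, reflB_apply, reflC_apply]

lemma map_zpow_u_mul_zpow_v (m n : ℤ) :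
    σ₂ (u ^ m * v ^ n) = AffineEquiv.constVAdd ℝ (ℝ × ℝ) (m • (3, 3) + n • (3, 0)) := by
  rw [map_mul, map_zpow, map_zpow, map_u, map_v, ← AffineEquiv.constVAdd_zsmul,
    ← AffineEquiv.constVAdd_zsmul, AffineEquiv.constVAdd_add]
  rfl

lemma map_apply_zero_of_mem_W {w : G₂} (hw : w ∈ W) : σ₂ w 0 = 0 := by
  rcases W_subset hw with rfl | rfl | rfl | rfl | rfl | rfl <;>
    simp [map_a, map_c, reflA_apply, reflC_apply]

lemma eq_one_of_mem_W {w : G₂} (hw : w ∈ W) (h : σ₂ w = 1) : w = 1 := by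
  have h₁ := congr($h (1, 0))
  rcases W_subset hw with rfl | rfl | rfl | rfl | rfl | rfl
  · rfl
  all_goals norm_num [map_a, map_c, reflA_apply, reflC_apply] at h₁

theorem injective : Function.Injective σ₂ := by
  refine (injective_iff_map_eq_one σ₂).mpr fun g hg => ?_
  obtain ⟨x, hx, w, hw, rfl⟩ := exists_mem_T_mul_mem_W g
  obtain ⟨m, n, rfl⟩ := commute_u_v.mem_closure_pair.mp hx
  have h₀ : (m • (3, 3) + n • (3, 0) : ℝ × ℝ) = 0 := by
    simpa [map_zpow_u_mul_zpow_v, map_apply_zero_of_mem_W hw] using congr($hg 0)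
  obtain ⟨rfl, rfl⟩ : m = 0 ∧ n = 0 := by
    norm_num [Prod.ext_iff] at h₀
    exact ⟨h₀.2, by simpa [h₀.2] using h₀.1⟩
  simp only [zpow_zero, one_mul] at hg ⊢
  exact eq_one_of_mem_W hw hg

end σ₂

theorem stmt_3 :
    ∃ σ : PresentedGroup
        ({FreeGroup.of 0 ^ 2, FreeGroup.of 1 ^ 2, FreeGroup.of 2 ^ 2,
          (FreeGroup.of 0 * FreeGroup.of 1) ^ 3,
          (FreeGroup.of 1 * FreeGroup.of 2) ^ 3,
          (FreeGroup.of 0 * FreeGroup.of 2) ^ 3} :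
          Set (FreeGroup (Fin 3))) →* ((ℝ × ℝ) ≃ᵃ[ℝ] (ℝ × ℝ)),
      (∀ p : ℝ × ℝ, σ (PresentedGroup.of 0) p = (p.1, p.1 - p.2)) ∧
      (∀ p : ℝ × ℝ, σ (PresentedGroup.of 1) p = (3 - p.2, 3 - p.1)) ∧
      (∀ p : ℝ × ℝ, σ (PresentedGroup.of 2) p = (-p.1 + p.2, p.2)) ∧
      Function.Injective σ :=
  ⟨σ₂, fun p => congr($σ₂.map_a p).trans (reflA_apply p),
    fun p => congr($σ₂.map_b p).trans (reflB_apply p),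
    fun p => congr($σ₂.map_c p).trans (reflC_apply p), σ₂.injective⟩
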